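/- arXiv:2603.03184 — 2 statements merged into one kernel-verified Lean document; each statement's English description precedes it below -/
import Mathlib

section
/- For all real a > 0 and b > 0: the limit as γ → ∞ of (∫_{0}^{∞} ln(1 + γ·a·x)·b·e^{-b·x} dx - ln γ) equals ln a - ln b - C, where C is the Euler–Mascheroni constant. Consequently, the limit as γ → ∞ of (∫_{0}^{∞} ln(1 + γ·a·x)·b·e^{-b·x} dx)/ln γ equals 1. -/
/-!
For `γ > 0`, `log (1 + γax) = log γ + log (ax + γ⁻¹)`, so the gap between the integral and
`log γ` is `∫ log (ax + ε) · b e^{-bx} dx` with `ε = γ⁻¹`. As `ε → 0⁺` this tends, by dominated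
convergence with majorant `(|log a| + |log x| + ax) · b e^{-bx}`, to `∫ log (ax) · b e^{-bx} dx`.
The substitution `t = bx` turns the latter into `log (a / b) + ∫ log t · e^{-t} dt`, and the last
integral is `Γ'(1) = -C`. The slope statement follows because `log γ → ∞`.
-/

open MeasureTheory Filter Real Set Topology

lemma integrableOn_rpow_mul_exp_neg_mul {s b : ℝ} (hs : -1 < s) (hb : 0 < b) :
    IntegrableOn (fun x : ℝ => x ^ s * exp (-b * x)) (Ioi 0) := by
  simpa using integrableOn_rpow_mul_exp_neg_mul_rpow hs one_pos hb

lemma abs_log_le_two_mul_rpow_add_rpow {x : ℝ} (hx : 0 < x) :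
    |log x| ≤ 2 * (x ^ (-(1 / 2) : ℝ) + x ^ (1 / 2 : ℝ)) := by
  have hpos : log x ≤ x ^ (1 / 2 : ℝ) / (1 / 2) := log_le_rpow_div hx.le one_half_pos
  have hneg : log x⁻¹ ≤ x⁻¹ ^ (1 / 2 : ℝ) / (1 / 2) := log_le_rpow_div (by positivity) one_half_pos
  rw [log_inv, inv_rpow hx.le, ← rpow_neg hx.le] at hneg
  have := rpow_nonneg hx.le (-(1 / 2) : ℝ)
  have := rpow_nonneg hx.le (1 / 2 : ℝ)
  rw [abs_le]
  constructor <;> linarith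

lemma integrableOn_abs_log_mul_exp_neg_mul {b : ℝ} (hb : 0 < b) :
    IntegrableOn (fun x : ℝ => |log x| * exp (-b * x)) (Ioi 0) := by
  have hmajorant := ((integrableOn_rpow_mul_exp_neg_mul (s := -(1 / 2)) (by norm_num) hb).add
    (integrableOn_rpow_mul_exp_neg_mul (s := 1 / 2) (by norm_num) hb)).const_mul 2
  refine hmajorant.mono' (by fun_prop) ?_
  filter_upwards [ae_restrict_mem measurableSet_Ioi] with x hx
  rw [norm_mul, norm_abs_eq_norm, norm_of_nonneg (exp_pos _).le, norm_eq_abs, Pi.add_apply,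
    ← add_mul, ← mul_assoc]
  exact mul_le_mul_of_nonneg_right (abs_log_le_two_mul_rpow_add_rpow hx) (exp_pos _).le

lemma integrableOn_log_mul_exp_neg_mul {b : ℝ} (hb : 0 < b) :
    IntegrableOn (fun x : ℝ => log x * exp (-b * x)) (Ioi 0) := by
  refine (integrableOn_abs_log_mul_exp_neg_mul hb).mono' (by fun_prop) (ae_of_all _ fun x => ?_)
  rw [norm_mul, norm_of_nonneg (exp_pos _).le, norm_eq_abs]

lemma integral_log_mul_exp_neg :
    ∫ t in Ioi (0 : ℝ), log t * exp (-t) = -eulerMascheroniConstant := by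
  have hGamma : HasDerivAt Complex.Gamma
      (∫ t : ℝ in Ioi 0, (t : ℂ) ^ ((1 : ℂ) - 1) * (log t * exp (-t))) 1 := by
    refine (Complex.hasDerivAt_GammaIntegral (by simp)).congr_of_eventuallyEq ?_
    filter_upwards [(Complex.continuous_re.isOpen_preimage _ isOpen_Ioi).mem_nhds
      (by simp : (1 : ℂ) ∈ Complex.re ⁻¹' Ioi 0)] with s hs using Complex.Gamma_eq_integral hs
  have hderiv := hGamma.unique Complex.hasDerivAt_Gamma_one
  simp only [sub_self, Complex.cpow_zero, one_mul] at hderiv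
  have hcast : ((∫ t in Ioi (0 : ℝ), log t * exp (-t) : ℝ) : ℂ)
      = ((-eulerMascheroniConstant : ℝ) : ℂ) := by
    rw [← integral_complex_ofReal, Complex.ofReal_neg, ← hderiv]
    simp only [Complex.ofReal_mul]
  exact_mod_cast hcast

lemma integral_mul_exp_neg_mul_Ioi {b : ℝ} (hb : 0 < b) :
    ∫ x in Ioi (0 : ℝ), b * exp (-b * x) = 1 := by
  rw [integral_const_mul, integral_exp_mul_Ioi (neg_neg_of_pos hb), mul_zero, exp_zero]
  field_simp

lemma integral_log_const_mul_mul_exp_neg {c : ℝ} (hc : 0 < c) :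
    ∫ t in Ioi (0 : ℝ), log (c * t) * exp (-t) = log c - eulerMascheroniConstant := by
  have hsplit : EqOn (fun t => log (c * t) * exp (-t))
      (fun t => log c * exp (-t) + log t * exp (-t)) (Ioi 0) := fun t ht => by
    simp only [log_mul hc.ne' (ne_of_gt ht), add_mul]
  have hexp : IntegrableOn (fun t => exp (-t)) (Ioi 0) := by
    simpa using exp_neg_integrableOn_Ioi 0 one_pos
  have hlog : IntegrableOn (fun t => log t * exp (-t)) (Ioi 0) := by
    simpa using integrableOn_log_mul_exp_neg_mul one_pos
  rw [setIntegral_congr_fun measurableSet_Ioi hsplit, integral_add (hexp.const_mul _) hlog,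
    integral_const_mul, integral_exp_neg_Ioi_zero, integral_log_mul_exp_neg]
  ring

lemma integral_log_mul_mul_exponential {a b : ℝ} (ha : 0 < a) (hb : 0 < b) :
    ∫ x in Ioi (0 : ℝ), log (a * x) * (b * exp (-b * x))
      = log a - log b - eulerMascheroniConstant := by
  have h := integral_comp_mul_left_Ioi (fun t => log (a / b * t) * exp (-t)) 0 hb
  rw [mul_zero, integral_log_const_mul_mul_exp_neg (div_pos ha hb), log_div ha.ne' hb.ne'] at h
  calc ∫ x in Ioi (0 : ℝ), log (a * x) * (b * exp (-b * x))
      = b * ∫ x in Ioi (0 : ℝ), log (a / b * (b * x)) * exp (-(b * x)) := by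
        rw [← integral_const_mul]
        congr 1 with x
        have hcancel : a / b * (b * x) = a * x := by field_simp
        rw [hcancel, neg_mul]
        ring
    _ = log a - log b - eulerMascheroniConstant := by
        rw [h, smul_eq_mul, ← mul_assoc, mul_inv_cancel₀ hb.ne', one_mul]

lemma abs_log_add_le {y ε : ℝ} (hy : 0 < y) (hε : 0 < ε) (hε1 : ε ≤ 1) :
    |log (y + ε)| ≤ |log y| + y := by
  rcases le_or_gt 1 (y + ε) with h | h
  · rw [abs_of_nonneg (log_nonneg h)]
    linarith [log_le_sub_one_of_pos (by linarith : 0 < y + ε), abs_nonneg (log y)]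
  · have hmono : log y ≤ log (y + ε) := log_le_log hy (by linarith)
    have hneg : log (y + ε) < 0 := log_neg (by positivity) h
    rw [abs_of_neg hneg, abs_of_neg (hmono.trans_lt hneg)]
    linarith

lemma integrableOn_log_majorant_mul_exponential (a : ℝ) {b : ℝ} (hb : 0 < b) :
    IntegrableOn (fun x => (|log a| + |log x| + a * x) * (b * exp (-b * x))) (Ioi 0) := by
  have hconst := (exp_neg_integrableOn_Ioi 0 hb).const_mul (|log a| * b)
  have hlog := (integrableOn_abs_log_mul_exp_neg_mul hb).const_mul b
  have hid : IntegrableOn (fun x => x * exp (-b * x)) (Ioi 0) := by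
    simpa using integrableOn_rpow_mul_exp_neg_mul (s := 1) (by norm_num) hb
  refine IntegrableOn.congr_fun ((hconst.add hlog).add (hid.const_mul (a * b)))
    (fun x _ => ?_) measurableSet_Ioi
  simp only [Pi.add_apply]
  ring

lemma norm_log_mul_add_mul_exponential_le {a b ε x : ℝ} (ha : 0 < a) (hb : 0 ≤ b)
    (hε : 0 < ε) (hε1 : ε ≤ 1) (hx : 0 < x) :
    ‖log (a * x + ε) * (b * exp (-b * x))‖ ≤ (|log a| + |log x| + a * x) * (b * exp (-b * x)) := by
  have hρ : 0 ≤ b * exp (-b * x) := by positivity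
  rw [norm_mul, norm_of_nonneg hρ, norm_eq_abs]
  gcongr
  calc |log (a * x + ε)| ≤ |log (a * x)| + a * x := abs_log_add_le (by positivity) hε hε1
    _ ≤ |log a| + |log x| + a * x := by
        rw [log_mul ha.ne' hx.ne']
        gcongr
        exact abs_add_le _ _

lemma integrableOn_log_mul_add_mul_exponential {a b ε : ℝ} (ha : 0 < a) (hb : 0 < b)
    (hε : 0 < ε) (hε1 : ε ≤ 1) :
    IntegrableOn (fun x => log (a * x + ε) * (b * exp (-b * x))) (Ioi 0) :=
  (integrableOn_log_majorant_mul_exponential a hb).mono' (by fun_prop) <| by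
    filter_upwards [ae_restrict_mem measurableSet_Ioi] with x hx
    exact norm_log_mul_add_mul_exponential_le ha hb.le hε hε1 hx

lemma tendsto_integral_log_mul_add_mul_exponential {a b : ℝ} (ha : 0 < a) (hb : 0 < b) :
    Tendsto (fun ε => ∫ x in Ioi (0 : ℝ), log (a * x + ε) * (b * exp (-b * x))) (𝓝[>] 0)
      (𝓝 (∫ x in Ioi (0 : ℝ), log (a * x) * (b * exp (-b * x)))) := by
  refine tendsto_integral_filter_of_dominated_convergence _
    (Eventually.of_forall fun ε => by fun_prop) ?_
    (integrableOn_log_majorant_mul_exponential a hb) ?_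
  · filter_upwards [Ioc_mem_nhdsGT one_pos] with ε hε
    filter_upwards [ae_restrict_mem measurableSet_Ioi] with x hx
    exact norm_log_mul_add_mul_exponential_le ha hb.le hε.1 hε.2 hx
  · filter_upwards [ae_restrict_mem measurableSet_Ioi] with x hx
    have hax : a * x + 0 ≠ 0 := by simpa using (mul_pos ha hx).ne'
    have hcont : ContinuousAt (fun ε => log (a * x + ε) * (b * exp (-b * x))) 0 :=
      ((continuousAt_log hax).comp (by fun_prop)).mul continuousAt_const
    simpa using hcont.tendsto.mono_left nhdsWithin_le_nhds

lemma integral_log_one_add_mul_mul_exponential {a b γ : ℝ} (ha : 0 < a) (hb : 0 < b)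
    (hγ : 1 ≤ γ) :
    ∫ x in Ioi (0 : ℝ), log (1 + γ * a * x) * (b * exp (-b * x))
      = log γ + ∫ x in Ioi (0 : ℝ), log (a * x + γ⁻¹) * (b * exp (-b * x)) := by
  have hγ0 : 0 < γ := one_pos.trans_le hγ
  have hsplit : EqOn (fun x => log (1 + γ * a * x) * (b * exp (-b * x)))
      (fun x => log γ * (b * exp (-b * x)) + log (a * x + γ⁻¹) * (b * exp (-b * x)))
      (Ioi 0) := fun x (hx : 0 < x) => by
    have hfactor : 1 + γ * a * x = γ * (a * x + γ⁻¹) := by field_simp; ring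
    dsimp only
    rw [hfactor, log_mul hγ0.ne' (by positivity), add_mul]
  rw [setIntegral_congr_fun measurableSet_Ioi hsplit,
    integral_add ((exp_neg_integrableOn_Ioi 0 hb).const_mul b |>.const_mul _)
      (integrableOn_log_mul_add_mul_exponential ha hb (by positivity) (inv_le_one_of_one_le₀ hγ)),
    integral_const_mul, integral_mul_exp_neg_mul_Ioi hb, mul_one]

lemma tendsto_div_nhds_one_of_tendsto_sub {α : Type*} {l : Filter α} {f g : α → ℝ} {c : ℝ}
    (hsub : Tendsto (fun x => f x - g x) l (𝓝 c)) (hg : Tendsto g l atTop) :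
    Tendsto (fun x => f x / g x) l (𝓝 1) := by
  have h := (hsub.div_atTop hg).add_const 1
  rw [zero_add] at h
  refine h.congr' ?_
  filter_upwards [hg.eventually_gt_atTop 0] with x hx
  field_simp
  ring

/-- Corollary 3 (natural-log form): for `a, b > 0`,
`∫_0^∞ ln(1 + γax) b e^{-bx} dx - ln γ → ln a - ln b - C` as `γ → ∞`, where `C` is the
Euler–Mascheroni constant; consequently the high-SNR slope is one. -/
theorem sensing_centric_ECR_high_SNR (a b : ℝ) (ha : 0 < a) (hb : 0 < b) :
    Tendsto (fun γ : ℝ =>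
        (∫ x in Set.Ioi (0 : ℝ), Real.log (1 + γ * a * x) * (b * Real.exp (-b * x)))
          - Real.log γ)
      atTop (nhds (Real.log a - Real.log b - Real.eulerMascheroniConstant)) ∧
    Tendsto (fun γ : ℝ =>
        (∫ x in Set.Ioi (0 : ℝ), Real.log (1 + γ * a * x) * (b * Real.exp (-b * x)))
          / Real.log γ)
      atTop (nhds 1) := by
  have hgap : Tendsto (fun γ : ℝ =>
      (∫ x in Ioi (0 : ℝ), log (1 + γ * a * x) * (b * exp (-b * x))) - log γ)
      atTop (𝓝 (log a - log b - eulerMascheroniConstant)) := by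
    rw [← integral_log_mul_mul_exponential ha hb]
    refine ((tendsto_integral_log_mul_add_mul_exponential ha hb).comp
      tendsto_inv_atTop_nhdsGT_zero).congr' ?_
    filter_upwards [eventually_ge_atTop 1] with γ hγ
    rw [Function.comp_apply, integral_log_one_add_mul_mul_exponential ha hb hγ, add_sub_cancel_left]
  exact ⟨hgap, tendsto_div_nhds_one_of_tendsto_sub hgap tendsto_log_atTop⟩
end

section
/- Let E be a complex inner product space, let h_s, h_c ∈ E with h_c ≠ 0, and set G = ‖h_s‖², g = ‖h_c‖², ρ = ⟨h_s, h_c⟩. Let τ be a real number with 0 ≤ τ ≤ |ρ|²/(|ρ|² + g²). Then w* = h_c/‖h_c‖ and Υ* = g/(1-τ) satisfy: ‖w*‖ = 1, |⟨h_s, w*⟩|² ≥ τ·Υ*, |⟨h_c, w*⟩|² ≥ (1-τ)·Υ*, and for every w ∈ E with ‖w‖ = 1 and every Υ ≥ 0 with |⟨h_s, w⟩|² ≥ τ·Υ and |⟨h_c, w⟩|² ≥ (1-τ)·Υ, one has Υ ≤ Υ*. -/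
/-!
By Cauchy–Schwarz a unit beamformer `w` has `‖⟪h_c, w⟫‖² ≤ ‖h_c‖²`, so the communication
constraint alone caps `Υ` at `‖h_c‖² / (1 - τ)`, and `h_c / ‖h_c‖` attains this cap. The bound
`τ ≤ |ρ|² / (|ρ|² + ‖h_c‖⁴)` is equivalent to `τ ‖h_c‖⁴ ≤ (1 - τ) |ρ|²`, which is exactly the sensing
constraint at `h_c / ‖h_c‖` with `Υ` at the cap.
-/

open scoped ComplexInnerProductSpace

section
variable {E : Type*} [NormedAddCommGroup E] [InnerProductSpace ℂ E]

theorem norm_inner_inv_norm_smul_right (x y : E) :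
    ‖⟪x, (‖y‖⁻¹ • y : E)⟫‖ = ‖⟪x, y⟫‖ / ‖y‖ := by
  rw [← Complex.coe_smul, inner_smul_right, norm_mul, Complex.norm_real,
    Real.norm_of_nonneg (by positivity), inv_mul_eq_div]

theorem norm_inner_self_inv_norm_smul (x : E) : ‖⟪x, (‖x‖⁻¹ • x : E)⟫‖ = ‖x‖ := by
  rw [norm_inner_inv_norm_smul_right, ← inner_self_re_eq_norm, inner_self_eq_norm_sq, pow_two,
    mul_self_div_self]

theorem sq_norm_inner_le_sq_norm_of_norm_le_one (x : E) {w : E} (hw : ‖w‖ ≤ 1) :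
    ‖⟪x, w⟫‖ ^ 2 ≤ ‖x‖ ^ 2 := by
  gcongr
  exact (norm_inner_le_norm x w).trans (mul_le_of_le_one_right (norm_nonneg x) hw)

end

theorem lt_one_of_le_div_add_sq {r g τ : ℝ} (hr : 0 ≤ r) (hg : g ≠ 0)
    (hτ : τ ≤ r / (r + g ^ 2)) : τ < 1 :=
  hτ.trans_lt <| (div_lt_one (by positivity)).2 (lt_add_of_pos_right r (by positivity))

theorem mul_div_one_sub_le_of_le_div_add_sq {r g τ : ℝ} (hr : 0 ≤ r) (hg : 0 < g)
    (hτ : τ ≤ r / (r + g ^ 2)) : τ * (g / (1 - τ)) ≤ r / g := by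
  have h1τ : 0 < 1 - τ := sub_pos.2 (lt_one_of_le_div_add_sq hr hg.ne' hτ)
  have hkey : τ * (r + g ^ 2) ≤ r := (le_div_iff₀ (by positivity)).1 hτ
  rw [mul_div_assoc', div_le_div_iff₀ h1τ hg]
  linarith

theorem pareto_regime_comm_centric_general
    {E : Type*} [NormedAddCommGroup E] [InnerProductSpace ℂ E]
    (hs hc : E) (hhc : hc ≠ 0) (τ : ℝ)
    (hτ1 : τ ≤ ‖⟪hs, hc⟫‖ ^ 2 / (‖⟪hs, hc⟫‖ ^ 2 + (‖hc‖ ^ 2) ^ 2)) :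
    ‖(‖hc‖⁻¹ • hc : E)‖ = 1 ∧
    τ * (‖hc‖ ^ 2 / (1 - τ)) ≤ ‖⟪hs, (‖hc‖⁻¹ • hc : E)⟫‖ ^ 2 ∧
    (1 - τ) * (‖hc‖ ^ 2 / (1 - τ)) ≤ ‖⟪hc, (‖hc‖⁻¹ • hc : E)⟫‖ ^ 2 ∧
    ∀ (w : E) (Υ : ℝ), ‖w‖ = 1 → 0 ≤ Υ →
      τ * Υ ≤ ‖⟪hs, w⟫‖ ^ 2 → (1 - τ) * Υ ≤ ‖⟪hc, w⟫‖ ^ 2 →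
        Υ ≤ ‖hc‖ ^ 2 / (1 - τ) := by
  have hg : 0 < ‖hc‖ ^ 2 := by positivity
  have h1τ : 0 < 1 - τ := sub_pos.2 (lt_one_of_le_div_add_sq (sq_nonneg _) hg.ne' hτ1)
  refine ⟨norm_smul_inv_norm hhc, ?_, ?_, ?_⟩
  · rw [norm_inner_inv_norm_smul_right, div_pow]
    exact mul_div_one_sub_le_of_le_div_add_sq (sq_nonneg _) hg hτ1
  · rw [norm_inner_self_inv_norm_smul, mul_div_cancel₀ _ h1τ.ne']
  · intro w Υ hw _ _ hcw
    rw [le_div_iff₀ h1τ, mul_comm]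
    exact hcw.trans (sq_norm_inner_le_sq_norm_of_norm_le_one hc hw.le)

/-- First regime of Lemma 6 / Theorem 7: with `g = ‖h_c‖²`, `ρ = ⟨h_s, h_c⟩`, and
`0 ≤ τ ≤ |ρ|²/(|ρ|² + g²)`, the communication-centric beamformer `w* = h_c/‖h_c‖`
together with `Υ* = g/(1-τ)` is feasible and optimal for the Pareto problem. -/
theorem pareto_regime_comm_centric
    {E : Type*} [NormedAddCommGroup E] [InnerProductSpace ℂ E]
    (hs hc : E) (hhc : hc ≠ 0) (τ : ℝ) (hτ0 : 0 ≤ τ)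
    (hτ1 : τ ≤ ‖⟪hs, hc⟫‖ ^ 2 / (‖⟪hs, hc⟫‖ ^ 2 + (‖hc‖ ^ 2) ^ 2)) :
    ‖(‖hc‖⁻¹ • hc : E)‖ = 1 ∧
    τ * (‖hc‖ ^ 2 / (1 - τ)) ≤ ‖⟪hs, (‖hc‖⁻¹ • hc : E)⟫‖ ^ 2 ∧
    (1 - τ) * (‖hc‖ ^ 2 / (1 - τ)) ≤ ‖⟪hc, (‖hc‖⁻¹ • hc : E)⟫‖ ^ 2 ∧
    ∀ (w : E) (Υ : ℝ), ‖w‖ = 1 → 0 ≤ Υ →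
      τ * Υ ≤ ‖⟪hs, w⟫‖ ^ 2 → (1 - τ) * Υ ≤ ‖⟪hc, w⟫‖ ^ 2 →
        Υ ≤ ‖hc‖ ^ 2 / (1 - τ) :=
  pareto_regime_comm_centric_general hs hc hhc τ hτ1
end
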